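/- Let D ⊂ ℂⁿ be a bounded domain with smooth boundary, h(x) = √(dist_E(x,∂D)), π the nearest-point projection, and d_CC a metric on ∂D. If (x_i) and (y_i) are sequences in D with x_i → p ∈ ∂D and y_i → q ∈ ∂D (so that π(x_i) → p, π(y_i) → q, h(x_i), h(y_i) → 0), and o ∈ D is a fixed base point with h(o) > 0, then the limit of exp(−⟨x_i, y_i⟩_o^g) exists and equals d_CC(p,q)·h(o) / ((d_CC(p, π(o)) + h(o))(d_CC(q, π(o)) + h(o))), where g(x,y) = 2 log( (d_CC(π(x),π(y)) + max(h(x),h(y))) / √(h(x)h(y)) ) and ⟨·,·⟩_o^g is the Gromov product for g. -/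
import Mathlib


open Filter Topology

/-- The hyperbolic filling function `g` built from a projection `π : D → Z` and a
height function `h : D → ℝ`:
`g(x,y) = 2 log((d(π x, π y) + max(h x, h y))/√(h x · h y))`. -/
noncomputable def fillingG {DD Z : Type*} [MetricSpace Z]
    (π : DD → Z) (h : DD → ℝ) (x y : DD) : ℝ :=
  2 * Real.log ((dist (π x) (π y) + max (h x) (h y)) / Real.sqrt (h x * h y))

/-- The Gromov product at `o` associated to `g`. -/
noncomputable def gromovProdG {DD Z : Type*} [MetricSpace Z]
    (π : DD → Z) (h : DD → ℝ) (o x y : DD) : ℝ :=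
  (fillingG π h x o + fillingG π h y o - fillingG π h x y) / 2

/-- If `x_i → p` and `y_i → q` at the boundary (i.e. `π(x_i) → p`, `π(y_i) → q`,
`h(x_i), h(y_i) → 0`, with heights eventually below `h(o)`), and `p ≠ q`, then
`exp(−⟨x_i,y_i⟩_o^g)` converges to
`d(p,q)·h(o)/((d(p,π o)+h(o))(d(q,π o)+h(o)))`. -/
theorem tendsto_exp_neg_gromovProdG {DD Z : Type*} [MetricSpace Z]
    (π : DD → Z) (h : DD → ℝ) (hpos : ∀ d : DD, 0 < h d)
    (o : DD) (p q : Z) (hpq : p ≠ q) (x y : ℕ → DD)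
    (hxp : Filter.Tendsto (fun i => π (x i)) Filter.atTop (𝓝 p))
    (hyq : Filter.Tendsto (fun i => π (y i)) Filter.atTop (𝓝 q))
    (hhx : Filter.Tendsto (fun i => h (x i)) Filter.atTop (𝓝 0))
    (hhy : Filter.Tendsto (fun i => h (y i)) Filter.atTop (𝓝 0))
    (hxlt : ∀ᶠ i in Filter.atTop, h (x i) < h o)
    (hylt : ∀ᶠ i in Filter.atTop, h (y i) < h o) :
    Filter.Tendsto (fun i => Real.exp (-(gromovProdG π h o (x i) (y i))))
      Filter.atTop
      (𝓝 (dist p q * h o / ((dist p (π o) + h o) * (dist q (π o) + h o)))) := by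
  have hco : (0:ℝ) < h o := hpos o
  -- The limit function
  have key : ∀ᶠ i in Filter.atTop,
      (dist (π (x i)) (π (y i)) + max (h (x i)) (h (y i))) * h o /
        ((dist (π (x i)) (π o) + h o) * (dist (π (y i)) (π o) + h o))
      = Real.exp (-(gromovProdG π h o (x i) (y i))) := by
    filter_upwards [hxlt, hylt] with i hax hby
    have ha : (0:ℝ) < h (x i) := hpos _
    have hb : (0:ℝ) < h (y i) := hpos _
    have hmaxa : max (h (x i)) (h o) = h o := max_eq_right hax.le
    have hmaxb : max (h (y i)) (h o) = h o := max_eq_right hby.le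
    have dxy : (0:ℝ) ≤ dist (π (x i)) (π (y i)) := dist_nonneg
    have dxo : (0:ℝ) ≤ dist (π (x i)) (π o) := dist_nonneg
    have dyo : (0:ℝ) ≤ dist (π (y i)) (π o) := dist_nonneg
    have sab : (0:ℝ) < Real.sqrt (h (x i) * h (y i)) :=
      Real.sqrt_pos.2 (mul_pos ha hb)
    have sac : (0:ℝ) < Real.sqrt (h (x i) * h o) := Real.sqrt_pos.2 (mul_pos ha hco)
    have sbc : (0:ℝ) < Real.sqrt (h (y i) * h o) := Real.sqrt_pos.2 (mul_pos hb hco)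
    have rCpos : (0:ℝ) < (dist (π (x i)) (π (y i)) + max (h (x i)) (h (y i))) /
        Real.sqrt (h (x i) * h (y i)) :=
      div_pos (by positivity) sab
    have rApos : (0:ℝ) < (dist (π (x i)) (π o) + max (h (x i)) (h o)) /
        Real.sqrt (h (x i) * h o) := div_pos (by positivity) sac
    have rBpos : (0:ℝ) < (dist (π (y i)) (π o) + max (h (y i)) (h o)) /
        Real.sqrt (h (y i) * h o) := div_pos (by positivity) sbc
    have hexp : Real.exp (-(gromovProdG π h o (x i) (y i))) =
        ((dist (π (x i)) (π (y i)) + max (h (x i)) (h (y i))) /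
          Real.sqrt (h (x i) * h (y i))) /
        (((dist (π (x i)) (π o) + max (h (x i)) (h o)) / Real.sqrt (h (x i) * h o)) *
         ((dist (π (y i)) (π o) + max (h (y i)) (h o)) / Real.sqrt (h (y i) * h o))) := by
      unfold gromovProdG fillingG
      rw [show -((2 * Real.log ((dist (π (x i)) (π o) + max (h (x i)) (h o)) /
            Real.sqrt (h (x i) * h o)) + 2 * Real.log ((dist (π (y i)) (π o) +
            max (h (y i)) (h o)) / Real.sqrt (h (y i) * h o)) - 2 * Real.log
            ((dist (π (x i)) (π (y i)) + max (h (x i)) (h (y i))) /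
            Real.sqrt (h (x i) * h (y i)))) / 2)
          = Real.log ((dist (π (x i)) (π (y i)) + max (h (x i)) (h (y i))) /
            Real.sqrt (h (x i) * h (y i)))
            - Real.log ((dist (π (x i)) (π o) + max (h (x i)) (h o)) /
            Real.sqrt (h (x i) * h o))
            - Real.log ((dist (π (y i)) (π o) + max (h (y i)) (h o)) /
            Real.sqrt (h (y i) * h o)) by ring]
      rw [Real.exp_sub, Real.exp_sub, Real.exp_log rCpos, Real.exp_log rApos,
        Real.exp_log rBpos, div_div]
    rw [hexp, hmaxa, hmaxb]
    have hsqrt : Real.sqrt (h (x i) * h o) * Real.sqrt (h (y i) * h o)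
        = Real.sqrt (h (x i) * h (y i)) * h o := by
      rw [← Real.sqrt_mul (by positivity : (0:ℝ) ≤ h (x i) * h o),
        show h (x i) * h o * (h (y i) * h o) = (h (x i) * h (y i)) * (h o * h o) by ring,
        Real.sqrt_mul (by positivity), Real.sqrt_mul_self hco.le]
    rw [div_mul_div_comm, div_div_div_eq]
    rw [hsqrt]
    field_simp
  refine Tendsto.congr' key ?_
  have hmax : Filter.Tendsto (fun i => max (h (x i)) (h (y i))) Filter.atTop (𝓝 0) := by
    have := hhx.max hhy
    simpa using this
  have hd : Filter.Tendsto (fun i => dist (π (x i)) (π (y i))) Filter.atTop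
      (𝓝 (dist p q)) := hxp.dist hyq
  have hdx : Filter.Tendsto (fun i => dist (π (x i)) (π o)) Filter.atTop
      (𝓝 (dist p (π o))) := hxp.dist tendsto_const_nhds
  have hdy : Filter.Tendsto (fun i => dist (π (y i)) (π o)) Filter.atTop
      (𝓝 (dist q (π o))) := hyq.dist tendsto_const_nhds
  have hden : ((dist p (π o) + h o) * (dist q (π o) + h o)) ≠ 0 := by positivity
  have hsum : Filter.Tendsto (fun i => dist (π (x i)) (π (y i)) + max (h (x i)) (h (y i)))
      Filter.atTop (𝓝 (dist p q)) := by simpa using hd.add hmax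
  exact (hsum.mul_const (h o)).div
    ((hdx.add tendsto_const_nhds).mul (hdy.add tendsto_const_nhds)) hden
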